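/- arXiv:2111.07401 — 2 statements merged into one kernel-verified Lean document; each statement's English description precedes it below -/
import Mathlib

section
/- (Donsker–Varadhan variational representation, Theorem 1 of the paper.) Let P and Q be probability measures on a measurable space X with P absolutely continuous with respect to Q and with finite Kullback–Leibler divergence D(P‖Q). Then D(P‖Q) equals the supremum, over all bounded measurable functions T : X → ℝ, of E_P[T] − log E_Q[exp(T)]. -/
/-!
For bounded `T`, the gap `D(P‖Q) - (E_P[T] - log E_Q[exp T])` is the divergence of `P` from the
tilted measure `Q_T ∝ exp T · Q`, hence nonnegative by Gibbs' inequality. The supremum is attained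
in the limit by `T = log (dP/dQ)`, made bounded by clamping `dP/dQ` to `[exp (-n), exp n]`; on
`{dP/dQ = 0}` the clamp is `exp (-n) → 0`, so `E_Q[exp T] → 1`, and dominated convergence gives
`E_P[T] → D(P‖Q)`.
-/

open MeasureTheory Real Filter Topology

/-- The Kullback–Leibler divergence `D(P‖Q) = ∫ log (dP/dQ) dP`. -/
noncomputable def klDiv {X : Type*} [MeasurableSpace X] (P Q : Measure X) : ℝ :=
  ∫ x, llr P Q x ∂P

lemma abs_log_max_min_le_abs_log {a b t : ℝ} (ha : a ≤ 1) (hb : 1 ≤ b)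
    (ht : 0 < t) : |log (max (min t b) a)| ≤ |log t| := by
  rcases le_total t 1 with ht1 | ht1
  · have hlo : t ≤ max (min t b) a := le_max_of_le_left (le_min le_rfl (ht1.trans hb))
    have hhi : max (min t b) a ≤ 1 := max_le ((min_le_left _ _).trans ht1) ha
    rw [abs_of_nonpos (log_nonpos (ht.trans_le hlo).le hhi), abs_of_nonpos (log_nonpos ht.le ht1)]
    exact neg_le_neg (log_le_log ht hlo)
  · have hlo : 1 ≤ max (min t b) a := le_max_of_le_left (le_min ht1 hb)
    have hhi : max (min t b) a ≤ t := max_le (min_le_left _ _) (ha.trans ht1)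
    rw [abs_of_nonneg (log_nonneg hlo), abs_of_nonneg (log_nonneg ht1)]
    exact log_le_log (zero_lt_one.trans_le hlo) hhi

lemma tendsto_max_min_exp_natCast {t : ℝ} (ht : 0 ≤ t) :
    Tendsto (fun n : ℕ ↦ max (min t (exp n)) (exp (-n))) atTop (𝓝 t) := by
  have hmin : ∀ᶠ n : ℕ in atTop, min t (exp n) = t :=
    ((tendsto_exp_atTop.comp tendsto_natCast_atTop_atTop).eventually_ge_atTop t).mono
      fun n hn ↦ min_eq_left hn
  have hmax : Tendsto (fun n : ℕ ↦ max t (exp (-n))) atTop (𝓝 (max t 0)) :=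
    tendsto_const_nhds.max
      (tendsto_exp_atBot.comp (tendsto_neg_atTop_atBot.comp tendsto_natCast_atTop_atTop))
  rw [max_eq_left ht] at hmax
  exact hmax.congr' (hmin.mono fun n hn ↦ by simp only [hn])

namespace MeasureTheory

variable {α : Type*} {mα : MeasurableSpace α} {μ ν : Measure α}

lemma integral_sub_log_integral_exp_le_integral_llr {f : α → ℝ} [IsProbabilityMeasure μ]
    [SigmaFinite ν] (hμν : μ ≪ ν) (h_int : Integrable (llr μ ν) μ) (hfμ : Integrable f μ)
    (hfν : Integrable (fun x ↦ exp (f x)) ν) :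
    ∫ x, f x ∂μ - log (∫ x, exp (f x) ∂ν) ≤ ∫ x, llr μ ν x ∂μ := by
  have hgibbs := InformationTheory.integral_llr_add_sub_measure_univ_nonneg
    (hμν.trans (absolutelyContinuous_tilted hfν)) (integrable_llr_tilted_right hμν hfμ h_int hfν)
  rw [integral_llr_tilted_right hμν hfμ hfν h_int] at hgibbs
  have : (ν.tilted f).real Set.univ ≤ 1 := measureReal_le_one
  simp only [probReal_univ] at hgibbs
  linarith

namespace Measure

noncomputable def truncRnDeriv (μ ν : Measure α) (n : ℕ) (x : α) : ℝ :=
  max (min (μ.rnDeriv ν x).toReal (exp n)) (exp (-n))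

lemma exp_neg_le_truncRnDeriv (n : ℕ) (x : α) : exp (-n) ≤ μ.truncRnDeriv ν n x :=
  le_max_right _ _

lemma truncRnDeriv_pos (n : ℕ) (x : α) : 0 < μ.truncRnDeriv ν n x :=
  (exp_pos _).trans_le (exp_neg_le_truncRnDeriv n x)

lemma truncRnDeriv_le_exp (n : ℕ) (x : α) : μ.truncRnDeriv ν n x ≤ exp n :=
  max_le (min_le_right _ _) (exp_le_exp.2 (by simp))

lemma abs_log_truncRnDeriv_le (n : ℕ) (x : α) : |log (μ.truncRnDeriv ν n x)| ≤ n := by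
  have hlo := log_le_log (exp_pos _) (exp_neg_le_truncRnDeriv (μ := μ) (ν := ν) n x)
  have hhi := log_le_log (truncRnDeriv_pos (μ := μ) (ν := ν) n x) (truncRnDeriv_le_exp n x)
  rw [log_exp] at hlo hhi
  exact abs_le.2 ⟨hlo, hhi⟩

lemma measurable_truncRnDeriv (n : ℕ) : Measurable (μ.truncRnDeriv ν n) :=
  ((measurable_rnDeriv μ ν).ennreal_toReal.min measurable_const).max measurable_const

lemma tendsto_integral_truncRnDeriv [IsFiniteMeasure μ] [IsFiniteMeasure ν] (hμν : μ ≪ ν) :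
    Tendsto (fun n ↦ ∫ x, μ.truncRnDeriv ν n x ∂ν) atTop (𝓝 (μ.real Set.univ)) := by
  rw [← integral_toReal_rnDeriv hμν]
  refine tendsto_integral_of_dominated_convergence (fun x ↦ (μ.rnDeriv ν x).toReal + 1)
    (fun n ↦ (measurable_truncRnDeriv n).aestronglyMeasurable)
    (integrable_toReal_rnDeriv.add (integrable_const 1)) (fun n ↦ ae_of_all _ fun x ↦ ?_)
    (ae_of_all _ fun x ↦ tendsto_max_min_exp_natCast ENNReal.toReal_nonneg)
  rw [norm_of_nonneg (truncRnDeriv_pos n x).le]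
  refine max_le ((min_le_left _ _).trans (le_add_of_nonneg_right zero_le_one)) ?_
  exact (exp_le_one_iff.2 (by simp)).trans (le_add_of_nonneg_left ENNReal.toReal_nonneg)

lemma tendsto_integral_log_truncRnDeriv [SigmaFinite μ] [SigmaFinite ν] (hμν : μ ≪ ν)
    (h_int : Integrable (llr μ ν) μ) :
    Tendsto (fun n ↦ ∫ x, log (μ.truncRnDeriv ν n x) ∂μ) atTop (𝓝 (∫ x, llr μ ν x ∂μ)) := by
  have hpos : ∀ᵐ x ∂μ, 0 < (μ.rnDeriv ν x).toReal := by
    filter_upwards [rnDeriv_pos hμν, hμν.ae_le (rnDeriv_lt_top μ ν)] with x h0 htop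
    exact ENNReal.toReal_pos h0.ne' htop.ne
  refine tendsto_integral_of_dominated_convergence (fun x ↦ |llr μ ν x|)
    (fun n ↦ (measurable_truncRnDeriv n).log.aestronglyMeasurable) h_int.abs
    (fun n ↦ hpos.mono fun x hx ↦ ?_) (hpos.mono fun x hx ↦ ?_)
  · exact abs_log_max_min_le_abs_log (exp_le_one_iff.2 (by simp))
      (one_le_exp (by simp)) hx
  · exact ((continuousAt_log hx.ne').tendsto).comp (tendsto_max_min_exp_natCast hx.le)

end Measure

end MeasureTheory

/-- **Donsker–Varadhan variational representation.** For probability measures `P ≪ Q` with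
finite KL divergence, `D(P‖Q)` is the supremum over all bounded measurable `T : X → ℝ` of
`E_P[T] − log E_Q[exp T]`. -/
theorem donsker_varadhan_representation {X : Type*} [MeasurableSpace X]
    (P Q : Measure X) [IsProbabilityMeasure P] [IsProbabilityMeasure Q]
    (hPQ : P ≪ Q) (hfin : Integrable (llr P Q) P) :
    klDiv P Q = sSup {r : ℝ | ∃ T : X → ℝ, Measurable T ∧ (∃ C : ℝ, ∀ x, |T x| ≤ C) ∧
      r = (∫ x, T x ∂P) - Real.log (∫ x, Real.exp (T x) ∂Q)} := by
  have hlim : Tendsto (fun n ↦ ∫ x, log (P.truncRnDeriv Q n x) ∂P -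
      log (∫ x, exp (log (P.truncRnDeriv Q n x)) ∂Q)) atTop (𝓝 (klDiv P Q)) := by
    simp_rw [exp_log (Measure.truncRnDeriv_pos _ _)]
    have hexp := Measure.tendsto_integral_truncRnDeriv (ν := Q) hPQ
    rw [probReal_univ] at hexp
    simpa [klDiv] using (Measure.tendsto_integral_log_truncRnDeriv hPQ hfin).sub
      ((continuousAt_log one_ne_zero).tendsto.comp hexp)
  symm
  refine IsLUB.csSup_eq ⟨?_, fun b hb ↦ le_of_tendsto' hlim fun n ↦ hb ?_⟩
    ⟨0, 0, measurable_const, ⟨0, by simp⟩, by simp⟩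
  · rintro _ ⟨T, hT, ⟨C, hC⟩, rfl⟩
    have hexp_le : ∀ x, ‖exp (T x)‖ ≤ exp C := fun x ↦ by
      rw [norm_of_nonneg (exp_pos _).le]
      exact exp_le_exp.2 (abs_le.1 (hC x)).2
    exact integral_sub_log_integral_exp_le_integral_llr hPQ hfin
      (.of_bound hT.aestronglyMeasurable C (ae_of_all _ hC))
      (.of_bound hT.exp.aestronglyMeasurable _ (ae_of_all _ hexp_le))
  · exact ⟨_, (Measure.measurable_truncRnDeriv n).log, ⟨n, Measure.abs_log_truncRnDeriv_le n⟩, rfl⟩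
end

section
/- (Refined chi-square upper bound on KL divergence, Theorem 2 of the paper, from Sason–Verdú.) Let P and Q be probability measures on a measurable space X, mutually absolutely continuous, with finite chi-square divergences χ²(P‖Q) and χ²(Q‖P). Then D(P‖Q) ≤ log(1 + χ²(P‖Q)) − (3/2)·(χ²(P‖Q))² / ((1 + χ²(Q‖P))·(1 + χ²(P‖Q))² − 1), where D is measured in nats (natural logarithm), and the right-hand side is denoted χ²_UP(P‖Q). -/
/-!
Write `r = dP/dQ`, `s = ∫ r dP = 1 + χ²(P‖Q)` and `u = s / r`. Under `P` one has `∫ u⁻¹ = 1`,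
`∫ u = s`, `∫ u² = s² (1 + χ²(Q‖P))` and `∫ log u = log s - D(P‖Q)`, so it suffices to bound
`∫ log u` from below. Cauchy–Schwarz applied to
`(u-1)²/u = √((u-1)²/(u(u+2))) · √((u-1)²(u+2)/u)` and the elementary inequality
`(y-1)²/(y(y+2)) ≤ 2/3 (1/y - 1 + log y)` for `y > 0` give
`(∫ u - 1)² ≤ 2/3 (∫ log u) (∫ u² - 1)`.
-/

open MeasureTheory Real

/-- The chi-square divergence `χ²(P‖Q) = ∫ (dP/dQ)² dQ − 1`. -/
noncomputable def chiSqDiv {X : Type*} [MeasurableSpace X] (P Q : Measure X) : ℝ :=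
  (∫ x, ((P.rnDeriv Q x).toReal) ^ 2 ∂Q) - 1

/-- The refined chi-square upper bound `χ²_UP(P‖Q)`. -/
noncomputable def chiSqUP {X : Type*} [MeasurableSpace X] (P Q : Measure X) : ℝ :=
  Real.log (1 + chiSqDiv P Q) -
    (3 / 2) * (chiSqDiv P Q) ^ 2 /
      ((1 + chiSqDiv Q P) * (1 + chiSqDiv P Q) ^ 2 - 1)

theorem sq_sub_one_div_le_inv_sub_one_add_log {y : ℝ} (hy : 0 < y) :
    (y - 1) ^ 2 / (y * (y + 2)) ≤ 2 / 3 * (y⁻¹ - 1 + log y) := by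
  set h : ℝ → ℝ := fun y => 2 / 3 * (y⁻¹ - 1 + log y) - (y - 1) ^ 2 / (y * (y + 2))
  have hderiv : ∀ x : ℝ, 0 < x →
      HasDerivAt h (2 / 3 * (x - 1) ^ 3 / (x ^ 2 * (x + 2) ^ 2)) x := by
    intro x hx
    refine ((((hasDerivAt_inv hx.ne').sub_const 1).add (hasDerivAt_log hx.ne')).const_mul
      (2 / 3)).sub ((((hasDerivAt_id x).sub_const 1).pow 2).div
        ((hasDerivAt_id x).mul ((hasDerivAt_id x).add_const 2))
        (by simp only [Pi.mul_apply, id]; positivity)) |>.congr_deriv ?_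
    simp only [id, Pi.mul_apply, Pi.pow_apply]
    field_simp
    ring
  have hmin : IsMinOn h (Set.Ioi 0) 1 :=
    isMinOn_Ioi_of_deriv (hderiv 1 one_pos).continuousAt
      (fun x hx => (hderiv x hx.1).differentiableAt.differentiableWithinAt)
      (fun x hx => (hderiv x (one_pos.trans hx)).differentiableAt.differentiableWithinAt)
      (fun x hx => by
        rw [(hderiv x hx.1).deriv]
        have : (x - 1) ^ 3 ≤ 0 := Odd.pow_nonpos (by decide) (sub_nonpos.2 hx.2.le)
        exact div_nonpos_of_nonpos_of_nonneg (by linarith) (by positivity))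
      (fun x (hx : 1 < x) => by
        rw [(hderiv x (one_pos.trans hx)).deriv]
        have : 0 < x - 1 := sub_pos.2 hx
        positivity)
  simpa [h] using hmin hy

section Integral

variable {α : Type*} [MeasurableSpace α] {μ : Measure α}

theorem sq_integral_le_integral_mul_integral {a b c : α → ℝ}
    (ha : Integrable a μ) (hb : Integrable b μ) (hc : Integrable c μ)
    (ha₀ : 0 ≤ᵐ[μ] a) (hc₀ : 0 ≤ᵐ[μ] c) (hbac : ∀ᵐ x ∂μ, b x ^ 2 ≤ a x * c x) :
    (∫ x, b x ∂μ) ^ 2 ≤ (∫ x, a x ∂μ) * ∫ x, c x ∂μ := by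
  have hquad : ∀ t : ℝ, 0 ≤ (∫ x, a x ∂μ) * (t * t) + (-2 * ∫ x, b x ∂μ) * t + ∫ x, c x ∂μ := by
    intro t
    have hint : ∫ x, (a x * (t * t) + -2 * b x * t + c x) ∂μ
        = (∫ x, a x ∂μ) * (t * t) + (-2 * ∫ x, b x ∂μ) * t + ∫ x, c x ∂μ := by
      rw [integral_add (by fun_prop) hc, integral_add (by fun_prop) (by fun_prop),
        integral_mul_const, integral_mul_const, integral_const_mul]
    rw [← hint]
    refine integral_nonneg_of_ae ?_
    filter_upwards [ha₀, hc₀, hbac] with x (hax : 0 ≤ a x) (hcx : 0 ≤ c x) hbx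
    rcases hax.eq_or_lt with ha0 | hapos
    · have : b x = 0 := by nlinarith
      simp [← ha0, this, hcx]
    · -- `a (a t² - 2 b t + c) = (a t - b)² + (a c - b²)`
      refine nonneg_of_mul_nonneg_right ?_ hapos
      nlinarith [sq_nonneg (a x * t - b x)]
  have := discrim_le_zero hquad
  rw [discrim] at this
  linarith

theorem integrable_log_of_integrable_inv {u : α → ℝ} (hu : ∀ᵐ x ∂μ, 0 < u x)
    (hu_int : Integrable u μ) (hinv : Integrable (fun x => (u x)⁻¹) μ) :
    Integrable (fun x => log (u x)) μ := by
  refine (hu_int.add hinv).mono' hu_int.aemeasurable.log.aestronglyMeasurable ?_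
  filter_upwards [hu] with x hx
  have hle := log_le_sub_one_of_pos hx
  have hge := log_le_sub_one_of_pos (inv_pos.2 hx)
  rw [log_inv] at hge
  rw [norm_eq_abs, abs_le, Pi.add_apply]
  constructor <;> linarith [inv_pos.2 hx]

theorem sq_integral_sub_one_le_integral_mul [IsProbabilityMeasure μ] {u : α → ℝ}
    (hu : ∀ᵐ x ∂μ, 0 < u x) (hu_int : Integrable u μ) (hu_sq : Integrable (fun x => u x ^ 2) μ)
    (hinv : ∫ x, (u x)⁻¹ ∂μ = 1) :
    (∫ x, u x ∂μ - 1) ^ 2 ≤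
      (∫ x, (u x - 1) ^ 2 / (u x * (u x + 2)) ∂μ) * (∫ x, u x ^ 2 ∂μ - 1) := by
  have hinv_int : Integrable (fun x => (u x)⁻¹) μ := .of_integral_ne_zero (by simp [hinv])
  have hb : ∫ x, (u x - 2 + (u x)⁻¹) ∂μ = ∫ x, u x ∂μ - 1 := by
    rw [integral_add (by fun_prop) hinv_int, integral_sub hu_int (by fun_prop), hinv]
    simp only [integral_const, probReal_univ, smul_eq_mul, one_mul]; ring
  have hc : ∫ x, (u x ^ 2 - 3 + 2 * (u x)⁻¹) ∂μ = ∫ x, u x ^ 2 ∂μ - 1 := by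
    rw [integral_add (by fun_prop) (by fun_prop), integral_sub hu_sq (by fun_prop),
      integral_const_mul, hinv]
    simp only [integral_const, probReal_univ, smul_eq_mul, one_mul, mul_one]; ring
  -- Cauchy–Schwarz with `b = (u-1)²/u`, `a = b/(u+2)`, `c = b(u+2)`, so that `b² = a c`
  have hpt : ∀ᵐ x ∂μ, 0 ≤ (u x - 1) ^ 2 / (u x * (u x + 2)) ∧
      (u x - 1) ^ 2 / (u x * (u x + 2)) ≤ u x - 2 + (u x)⁻¹ ∧
      0 ≤ u x ^ 2 - 3 + 2 * (u x)⁻¹ ∧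
      (u x - 2 + (u x)⁻¹) ^ 2 =
        (u x - 1) ^ 2 / (u x * (u x + 2)) * (u x ^ 2 - 3 + 2 * (u x)⁻¹) := by
    filter_upwards [hu] with x hx
    have hb' : u x - 2 + (u x)⁻¹ = (u x - 1) ^ 2 / u x := by field_simp; ring
    have hc' : u x ^ 2 - 3 + 2 * (u x)⁻¹ = (u x - 1) ^ 2 * (u x + 2) / u x := by field_simp; ring
    rw [hb', hc']
    refine ⟨by positivity, div_le_div_of_nonneg_left (sq_nonneg _) hx (by nlinarith),
      by positivity, ?_⟩
    field_simp
  have ha_int : Integrable (fun x => (u x - 1) ^ 2 / (u x * (u x + 2))) μ := by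
    refine (hinv_int.add (by fun_prop : Integrable (fun x => u x - 2) μ)).mono'
      (by fun_prop : AEMeasurable _ μ).aestronglyMeasurable ?_
    filter_upwards [hpt] with x hx
    rw [norm_eq_abs, abs_of_nonneg hx.1, Pi.add_apply]
    linarith [hx.2.1]
  rw [← hb, ← hc]
  exact sq_integral_le_integral_mul_integral ha_int (by fun_prop) (by fun_prop)
    (hpt.mono fun x h => h.1) (hpt.mono fun x h => h.2.2.1) (hpt.mono fun x h => h.2.2.2.le)

theorem le_integral_log_of_integral_inv_eq_one [IsProbabilityMeasure μ] {u : α → ℝ}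
    (hu : ∀ᵐ x ∂μ, 0 < u x) (hu_int : Integrable u μ) (hu_sq : Integrable (fun x => u x ^ 2) μ)
    (hinv : ∫ x, (u x)⁻¹ ∂μ = 1) :
    3 / 2 * (∫ x, u x ∂μ - 1) ^ 2 / (∫ x, u x ^ 2 ∂μ - 1) ≤ ∫ x, log (u x) ∂μ := by
  have hinv_int : Integrable (fun x => (u x)⁻¹) μ := .of_integral_ne_zero (by simp [hinv])
  have hlog_int := integrable_log_of_integrable_inv hu hu_int hinv_int
  have hf : ∫ x, ((u x)⁻¹ - 1 + log (u x)) ∂μ = ∫ x, log (u x) ∂μ := by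
    rw [integral_add (by fun_prop) hlog_int, integral_sub hinv_int (by fun_prop), hinv]
    simp
  have hA_nonneg : 0 ≤ ∫ x, (u x - 1) ^ 2 / (u x * (u x + 2)) ∂μ :=
    integral_nonneg_of_ae (hu.mono fun x hx => by positivity)
  have hA_le : ∫ x, (u x - 1) ^ 2 / (u x * (u x + 2)) ∂μ ≤ 2 / 3 * ∫ x, log (u x) ∂μ := by
    rw [← hf, ← integral_const_mul]
    exact integral_mono_of_nonneg (hu.mono fun x hx => by positivity)
      ((by fun_prop : Integrable (fun x => (u x)⁻¹ - 1 + log (u x)) μ).const_mul _)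
      (hu.mono fun x hx => sq_sub_one_div_le_inv_sub_one_add_log hx)
  have hCS := sq_integral_sub_one_le_integral_mul hu hu_int hu_sq hinv
  rcases le_or_gt (∫ x, u x ^ 2 ∂μ - 1) 0 with hd | hd
  · exact (div_nonpos_of_nonneg_of_nonpos (by positivity) hd).trans (by linarith)
  · refine div_le_of_le_mul₀ hd.le (by linarith) ?_
    nlinarith [mul_le_mul_of_nonneg_right hA_le hd.le]

theorem integral_log_le_of_integral_inv_eq_one [IsProbabilityMeasure μ] {r : α → ℝ}
    (hr : ∀ᵐ x ∂μ, 0 < r x) (hr_int : Integrable r μ)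
    (hinv_sq : Integrable (fun x => (r x)⁻¹ ^ 2) μ) (hinv : ∫ x, (r x)⁻¹ ∂μ = 1) :
    ∫ x, log (r x) ∂μ ≤ log (∫ x, r x ∂μ) -
      3 / 2 * (∫ x, r x ∂μ - 1) ^ 2 / ((∫ x, (r x)⁻¹ ^ 2 ∂μ) * (∫ x, r x ∂μ) ^ 2 - 1) := by
  have hinv_int : Integrable (fun x => (r x)⁻¹) μ := .of_integral_ne_zero (by simp [hinv])
  -- Cauchy–Schwarz: `1 = (∫ 1)² ≤ (∫ r) (∫ r⁻¹) = ∫ r`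
  have hs : 1 ≤ ∫ x, r x ∂μ := by
    have := sq_integral_le_integral_mul_integral hr_int (integrable_const 1) hinv_int
      (hr.mono fun x hx => hx.le) (hr.mono fun x hx => (inv_pos.2 hx).le)
      (hr.mono fun x hx => by simp [hx.ne'])
    simpa [hinv] using this
  set s := ∫ x, r x ∂μ
  have hs0 : 0 < s := one_pos.trans_le hs
  have hu := le_integral_log_of_integral_inv_eq_one (μ := μ) (u := fun x => s * (r x)⁻¹)
    (hr.mono fun x hx => by positivity) (hinv_int.const_mul s)
    (by simpa only [mul_pow] using hinv_sq.const_mul (s ^ 2))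
    (by simp_rw [mul_inv, inv_inv]; rw [integral_const_mul, inv_mul_cancel₀ hs0.ne'])
  have hlog : ∫ x, log (s * (r x)⁻¹) ∂μ = log s - ∫ x, log (r x) ∂μ := by
    have hlog_int := integrable_log_of_integrable_inv hr hr_int hinv_int
    calc ∫ x, log (s * (r x)⁻¹) ∂μ = ∫ x, (log s - log (r x)) ∂μ :=
          integral_congr_ae <| hr.mono fun x hx => by
            simp only [log_mul hs0.ne' (inv_ne_zero hx.ne'), log_inv, sub_eq_add_neg]
      _ = log s - ∫ x, log (r x) ∂μ := by
          rw [integral_sub (integrable_const _) hlog_int]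
          simp
  simp_rw [mul_pow, integral_const_mul, hinv, hlog, mul_one, mul_comm (s ^ 2)] at hu
  linarith

end Integral

section RadonNikodym

variable {X : Type*} [MeasurableSpace X] {P Q : Measure X} [SigmaFinite P] [SigmaFinite Q]

theorem toReal_rnDeriv_pos (hPQ : P ≪ Q) : ∀ᵐ x ∂P, 0 < (P.rnDeriv Q x).toReal := by
  filter_upwards [Measure.rnDeriv_pos hPQ, hPQ.ae_le (Measure.rnDeriv_lt_top P Q)] with x h0 htop
  exact ENNReal.toReal_pos h0.ne' htop.ne

theorem toReal_rnDeriv_swap_ae_eq_inv (hPQ : P ≪ Q) :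
    (fun x => (Q.rnDeriv P x).toReal) =ᵐ[P] fun x => ((P.rnDeriv Q x).toReal)⁻¹ := by
  filter_upwards [Measure.inv_rnDeriv hPQ] with x hx
  rw [← hx, Pi.inv_apply, ENNReal.toReal_inv]

theorem chiSqDiv_eq_integral_toReal_rnDeriv (hPQ : P ≪ Q) :
    chiSqDiv P Q = ∫ x, (P.rnDeriv Q x).toReal ∂P - 1 := by
  rw [chiSqDiv, ← integral_toReal_rnDeriv_mul hPQ]
  simp only [sq]

theorem chiSqDiv_swap_eq_integral_inv_sq (hPQ : P ≪ Q) :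
    chiSqDiv Q P = ∫ x, ((P.rnDeriv Q x).toReal)⁻¹ ^ 2 ∂P - 1 := by
  rw [chiSqDiv]
  congr 1
  exact integral_congr_ae ((toReal_rnDeriv_swap_ae_eq_inv hPQ).fun_comp (· ^ 2))

end RadonNikodym

/-- **Refined chi-square upper bound on KL divergence (Sason–Verdú).** For mutually absolutely
continuous probability measures `P`, `Q` with finite chi-square divergences in both directions,
`D(P‖Q) ≤ log(1 + χ²(P‖Q)) − (3/2)·χ²(P‖Q)² / ((1 + χ²(Q‖P))·(1 + χ²(P‖Q))² − 1)`,
where `D` is measured in nats. -/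
theorem klDiv_le_chiSqUP {X : Type*} [MeasurableSpace X]
    (P Q : Measure X) [IsProbabilityMeasure P] [IsProbabilityMeasure Q]
    (hPQ : P ≪ Q) (hQP : Q ≪ P)
    (hchiPQ : Integrable (fun x => ((P.rnDeriv Q x).toReal) ^ 2) Q)
    (hchiQP : Integrable (fun x => ((Q.rnDeriv P x).toReal) ^ 2) P) :
    klDiv P Q ≤ chiSqUP P Q := by
  have hswap := toReal_rnDeriv_swap_ae_eq_inv hPQ
  have hr_int : Integrable (fun x => (P.rnDeriv Q x).toReal) P :=
    (integrable_toReal_rnDeriv_mul_iff hPQ).1 (by simpa only [sq] using hchiPQ)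
  have hinv : ∫ x, ((P.rnDeriv Q x).toReal)⁻¹ ∂P = 1 := by
    rw [← integral_congr_ae hswap, Measure.integral_toReal_rnDeriv hQP, probReal_univ]
  have key := integral_log_le_of_integral_inv_eq_one (toReal_rnDeriv_pos hPQ) hr_int
    (hchiQP.congr (hswap.fun_comp (· ^ 2))) hinv
  rw [chiSqUP, chiSqDiv_eq_integral_toReal_rnDeriv hPQ, chiSqDiv_swap_eq_integral_inv_sq hPQ]
  simpa only [klDiv, llr, add_sub_cancel] using key
end
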